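/- arXiv:2601.11756 — 3 statements merged into one kernel-verified Lean document; each statement's English description precedes it below -/
import Mathlib

section
/- For all θ, θ' ∈ (0, π/3), the inequality sin(θ/2)·sin(θ'/2)·√(1 - sin(θ/2)² - sin(θ'/2)²) < arcsin(tan(θ/2)·tan(θ'/2)) holds. -/
open Real

theorem stmt_0 (θ θ' : ℝ) (hθ : θ ∈ Set.Ioo 0 (π/3)) (hθ' : θ' ∈ Set.Ioo 0 (π/3)) :
    sin (θ/2) * sin (θ'/2) * Real.sqrt (1 - sin (θ/2)^2 - sin (θ'/2)^2)
      < arcsin (tan (θ/2) * tan (θ'/2)) := by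
  obtain ⟨h1, h2⟩ := hθ
  obtain ⟨h1', h2'⟩ := hθ'
  have pi_pos := Real.pi_pos
  have ha0 : 0 < θ/2 := by linarith
  have ha1 : θ/2 < π/4 := by linarith
  have hb0 : 0 < θ'/2 := by linarith
  have hb1 : θ'/2 < π/4 := by linarith
  have hsa : 0 < sin (θ/2) := Real.sin_pos_of_pos_of_lt_pi ha0 (by linarith)
  have hsb : 0 < sin (θ'/2) := Real.sin_pos_of_pos_of_lt_pi hb0 (by linarith)
  have hta0 : 0 < tan (θ/2) := Real.tan_pos_of_pos_of_lt_pi_div_two ha0 (by linarith)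
  have htb0 : 0 < tan (θ'/2) := Real.tan_pos_of_pos_of_lt_pi_div_two hb0 (by linarith)
  have hta : tan (θ/2) < 1 := by
    rw [← Real.tan_pi_div_four]
    exact Real.tan_lt_tan_of_lt_of_lt_pi_div_two (by linarith) (by linarith) ha1
  have htb : tan (θ'/2) < 1 := by
    rw [← Real.tan_pi_div_four]
    exact Real.tan_lt_tan_of_lt_of_lt_pi_div_two (by linarith) (by linarith) hb1
  have hT0 : 0 < tan (θ/2) * tan (θ'/2) := mul_pos hta0 htb0
  have hT1 : tan (θ/2) * tan (θ'/2) ≤ 1 := by nlinarith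
  have hca : 0 < cos (θ/2) := Real.cos_pos_of_mem_Ioo ⟨by linarith, by linarith⟩
  have hcb : 0 < cos (θ'/2) := Real.cos_pos_of_mem_Ioo ⟨by linarith, by linarith⟩
  have hsa4 : sin (θ/2) < Real.sqrt 2 / 2 := by
    rw [← Real.sin_pi_div_four]
    exact Real.sin_lt_sin_of_lt_of_le_pi_div_two (by linarith) (by linarith) ha1
  have hsb4 : sin (θ'/2) < Real.sqrt 2 / 2 := by
    rw [← Real.sin_pi_div_four]
    exact Real.sin_lt_sin_of_lt_of_le_pi_div_two (by linarith) (by linarith) hb1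
  have h2sq : Real.sqrt 2 ^ 2 = 2 := Real.sq_sqrt (by norm_num)
  have hss : sin (θ/2)^2 + sin (θ'/2)^2 < 1 := by nlinarith
  have hcc : cos (θ/2) * cos (θ'/2) ≤ 1 := by
    nlinarith [Real.cos_le_one (θ/2), Real.cos_le_one (θ'/2)]
  have key1 : sin (θ/2) * sin (θ'/2) ≤ tan (θ/2) * tan (θ'/2) := by
    rw [Real.tan_eq_sin_div_cos, Real.tan_eq_sin_div_cos, div_mul_div_comm,
      le_div_iff₀ (by positivity)]
    nlinarith [mul_pos hsa hsb, hcc]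
  have hsqrt : Real.sqrt (1 - sin (θ/2)^2 - sin (θ'/2)^2) < 1 := by
    have : Real.sqrt (1 - sin (θ/2)^2 - sin (θ'/2)^2) < Real.sqrt 1 :=
      Real.sqrt_lt_sqrt (by linarith) (by linarith [pow_pos hsa 2, pow_pos hsb 2])
    simpa using this
  have step1 : sin (θ/2) * sin (θ'/2) * Real.sqrt (1 - sin (θ/2)^2 - sin (θ'/2)^2)
      < sin (θ/2) * sin (θ'/2) := by
    have := mul_lt_mul_of_pos_left hsqrt (mul_pos hsa hsb)
    linarith [this, mul_one (sin (θ/2) * sin (θ'/2))]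
  have harc : tan (θ/2) * tan (θ'/2) ≤ arcsin (tan (θ/2) * tan (θ'/2)) := by
    have h1 := Real.sin_arcsin (by linarith : -1 ≤ tan (θ/2) * tan (θ'/2)) hT1
    have h2 := Real.sin_le (Real.arcsin_nonneg.mpr hT0.le)
    linarith
  linarith
end

section
/- Let a ∈ (0,1), φ ∈ (0, π). Then ∫₀^{φ/2} a·cos(s)/√((1−a²)·cos(φ/2)² + (a·cos(s))²) ds = arcsin(a·sin(φ/2)/√((1−a²)·cos(φ/2)² + a²)). -/
open Real

theorem stmt_5 (a φ : ℝ) (ha : a ∈ Set.Ioo (0:ℝ) 1) (hφ : φ ∈ Set.Ioo 0 π) :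
    ∫ s in (0:ℝ)..(φ/2),
        a * cos s / Real.sqrt ((1 - a^2) * cos (φ/2)^2 + (a * cos s)^2)
      = arcsin (a * sin (φ/2) / Real.sqrt ((1 - a^2) * cos (φ/2)^2 + a^2)) := by
  obtain ⟨ha0, ha1⟩ := ha
  obtain ⟨hφ0, hφπ⟩ := hφ
  set c := (1 - a^2) * cos (φ/2)^2 with hc
  have h1a : (0:ℝ) < 1 - a^2 := by nlinarith
  have hcosφ : 0 < cos (φ/2) :=
    Real.cos_pos_of_mem_Ioo ⟨by linarith [pi_pos], by linarith⟩
  have hcpos : 0 < c := mul_pos h1a (by positivity)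
  set K := Real.sqrt (c + a^2) with hKdef
  have hK2 : K^2 = c + a^2 := Real.sq_sqrt (by positivity)
  have hKpos : 0 < K := Real.sqrt_pos.2 (by positivity)
  have key : ∀ s : ℝ, HasDerivAt (fun t => arcsin (a * sin t / K))
      (a * cos s / Real.sqrt (c + (a * cos s)^2)) s := by
    intro s
    have hlt : (a * sin s / K)^2 < 1 := by
      rw [div_pow, div_lt_one (by positivity), hK2]
      nlinarith [sin_sq_add_cos_sq s, sq_nonneg (a * cos s)]
    have habs : |a * sin s / K| < 1 := by
      rwa [← sq_lt_one_iff_abs_lt_one]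
    have h₁ : a * sin s / K ≠ -1 := by
      intro h; rw [h] at habs; simp at habs
    have h₂ : a * sin s / K ≠ 1 := by
      intro h; rw [h] at habs; simp at habs
    have hinner : HasDerivAt (fun t => a * sin t / K) (a * cos s / K) s :=
      ((Real.hasDerivAt_sin s).const_mul a).div_const K
    have := (Real.hasDerivAt_arcsin h₁ h₂).comp s hinner
    convert this using 1
    case e'_4 => rfl
    case e'_5 => rfl
    case e'_8 => rfl
    have heq : 1 - (a * sin s / K)^2 = (c + (a * cos s)^2) / K^2 := by
      field_simp
      nlinarith [sin_sq_add_cos_sq s]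
    rw [heq, Real.sqrt_div (by positivity) _, Real.sqrt_sq hKpos.le]
    have hden : (0:ℝ) < Real.sqrt (c + (a * cos s)^2) :=
      Real.sqrt_pos.2 (by positivity)
    field_simp
  have hcont : Continuous fun s => a * cos s / Real.sqrt (c + (a * cos s)^2) := by
    apply Continuous.div (by continuity) (by continuity)
    intro x
    positivity
  rw [intervalIntegral.integral_eq_sub_of_hasDerivAt (fun s _ => key s)
    (hcont.intervalIntegrable _ _)]
  simp
end

section
/- Let a ∈ (0,1) and φ ∈ (0, π) with √(1−a²)·sin(φ/2) < 1. Define θ = 2·arcsin(a), θ' = 2·arcsin(√(1−a²)·sin(φ/2)). Then ∫₀^φ ∫_{arcsin(a)}^{T(ψ)} cos(t) dt dψ = 2·arcsin(tan(θ/2)·tan(θ'/2)) − φ·sin(θ/2), where T(ψ) = arcsin(a·cos(ψ−φ/2)/√((1−a²)·cos(φ/2)² + (a·cos(ψ−φ/2))²)). -/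
set_option maxHeartbeats 1000000
open Real

theorem stmt_12 (a φ : ℝ) (ha : a ∈ Set.Ioo (0:ℝ) 1) (hφ : φ ∈ Set.Ioo 0 π)
    (hlt : Real.sqrt (1 - a^2) * sin (φ/2) < 1)
    (θ θ' : ℝ) (hθ : θ = 2 * arcsin a)
    (hθ' : θ' = 2 * arcsin (Real.sqrt (1 - a^2) * sin (φ/2)))
    (T : ℝ → ℝ)
    (hT : ∀ ψ, T ψ = arcsin (a * cos (ψ - φ/2) /
        Real.sqrt ((1 - a^2) * cos (φ/2)^2 + (a * cos (ψ - φ/2))^2))) :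
    ∫ ψ in (0:ℝ)..φ, ∫ t in arcsin a..(T ψ), cos t
      = 2 * arcsin (tan (θ/2) * tan (θ'/2)) - φ * sin (θ/2) := by
  obtain ⟨ha0, ha1⟩ := ha
  obtain ⟨hφ0, hφπ⟩ := hφ
  have h1a : 0 < 1 - a^2 := by nlinarith
  have hcosφ : 0 < cos (φ/2) := Real.cos_pos_of_mem_Ioo ⟨by linarith [Real.pi_pos], by linarith⟩
  have hsinφ : 0 < sin (φ/2) := Real.sin_pos_of_pos_of_lt_pi (by linarith) (by linarith)
  set s : ℝ := Real.sqrt (1 - a^2) * sin (φ/2) with hs_def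
  have hs0 : 0 < s := mul_pos (Real.sqrt_pos.mpr h1a) hsinφ
  have hs2 : s^2 = (1 - a^2) * sin (φ/2)^2 := by
    rw [hs_def, mul_pow, Real.sq_sqrt h1a.le]
  set c : ℝ := Real.sqrt (a^2 + (1 - a^2) * cos (φ/2)^2) with hc_def
  have hc2pos : 0 < a^2 + (1 - a^2) * cos (φ/2)^2 := by positivity
  have hc_pos : 0 < c := Real.sqrt_pos.mpr hc2pos
  have hc2 : c^2 = a^2 + (1 - a^2) * cos (φ/2)^2 := Real.sq_sqrt hc2pos.le
  have hac : a < c := by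
    nlinarith [mul_pos h1a (pow_pos hcosφ 2)]
  have hc1 : 1 - s^2 = c^2 := by
    have := sin_sq_add_cos_sq (φ/2); nlinarith
  -- inner integrand as explicit function
  set g : ℝ → ℝ := fun ψ => a * cos (ψ - φ/2) /
      Real.sqrt ((1 - a^2) * cos (φ/2)^2 + (a * cos (ψ - φ/2))^2) - a with hg_def
  have hDpos : ∀ ψ : ℝ, 0 < Real.sqrt ((1 - a^2) * cos (φ/2)^2 + (a * cos (ψ - φ/2))^2) := by
    intro ψ
    apply Real.sqrt_pos.mpr
    have := mul_pos h1a (pow_pos hcosφ 2)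
    nlinarith [sq_nonneg (a * cos (ψ - φ/2))]
  have hinner : ∀ ψ : ℝ, (∫ t in arcsin a..(T ψ), cos t) = g ψ := by
    intro ψ
    rw [integral_cos, hT, Real.sin_arcsin (by linarith) ha1.le]
    set x := a * cos (ψ - φ/2)
    set D := Real.sqrt ((1 - a^2) * cos (φ/2)^2 + x^2) with hD_def
    have hD : 0 < D := hDpos ψ
    have habs : |x| ≤ D := Real.abs_le_sqrt (by nlinarith [mul_pos h1a (pow_pos hcosφ 2)])
    obtain ⟨hx1, hx2⟩ := abs_le.mp habs
    rw [Real.sin_arcsin (by rw [le_div_iff₀ hD]; linarith) ((div_le_one hD).mpr hx2)]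
  -- antiderivative
  set F : ℝ → ℝ := fun ψ => arcsin (a * sin (ψ - φ/2) / c) - a * ψ with hF_def
  have hderiv : ∀ ψ : ℝ, HasDerivAt F (g ψ) ψ := by
    intro ψ
    set u := ψ - φ/2 with hu
    have hxin : |a * sin u / c| < 1 := by
      rw [abs_div, abs_of_pos hc_pos, div_lt_one hc_pos, abs_mul, abs_of_pos ha0]
      calc a * |sin u| ≤ a * 1 := by nlinarith [abs_sin_le_one u, abs_nonneg (sin u)]
        _ < c := by linarith
    obtain ⟨hxn1, hx1⟩ := abs_lt.mp hxin
    have h1 : HasDerivAt (fun ψ : ℝ => a * sin (ψ - φ/2) / c) (a * cos u / c) ψ := by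
      have := ((Real.hasDerivAt_sin (ψ - φ/2)).comp ψ ((hasDerivAt_id ψ).sub_const (φ/2)))
      simpa using (this.const_mul a).div_const c
    have h2 := (Real.hasDerivAt_arcsin (ne_of_gt hxn1) (ne_of_lt hx1)).comp ψ h1
    have h3 : HasDerivAt F (1 / Real.sqrt (1 - (a * sin u / c)^2) * (a * cos u / c) - a) ψ := by
      have h4 := h2.sub ((hasDerivAt_id ψ).const_mul a)
      exact h4.congr_deriv (by rw [hu]; ring)
    convert h3 using 1
    rw [hg_def]
    have hkey : (1 - (a * sin u / c)^2) =
        ((1 - a^2) * cos (φ/2)^2 + (a * cos u)^2) / c^2 := by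
      field_simp
      nlinarith [sin_sq_add_cos_sq u]
    have hs2' : 0 ≤ (1 - a^2) * cos (φ/2)^2 + (a * cos u)^2 := by positivity
    rw [hkey, Real.sqrt_div hs2', Real.sqrt_sq hc_pos.le]
    have hD := hDpos ψ
    rw [← hu] at hD
    beta_reduce
    rw [← hu]
    field_simp
  have hcont : Continuous g := by
    apply Continuous.sub _ continuous_const
    apply Continuous.div
    · fun_prop
    · fun_prop
    · intro ψ; exact (hDpos ψ).ne'
  have houter : (∫ ψ in (0:ℝ)..φ, g ψ) = F φ - F 0 :=
    intervalIntegral.integral_eq_sub_of_hasDerivAt (fun ψ _ => hderiv ψ)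
      (hcont.intervalIntegrable 0 φ)
  have hLHS : (∫ ψ in (0:ℝ)..φ, ∫ t in arcsin a..(T ψ), cos t)
      = 2 * arcsin (a * sin (φ/2) / c) - a * φ := by
    rw [intervalIntegral.integral_congr (fun ψ _ => hinner ψ), houter, hF_def]
    simp only
    have : φ - φ/2 = φ/2 := by ring
    rw [this]
    rw [show (0:ℝ) - φ/2 = -(φ/2) by ring, Real.sin_neg]
    rw [show a * -sin (φ/2) / c = -(a * sin (φ/2) / c) by ring, Real.arcsin_neg]
    ring
  rw [hLHS, hθ, hθ']
  rw [show 2 * arcsin a / 2 = arcsin a by ring, show 2 * arcsin s / 2 = arcsin s by ring]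
  rw [Real.sin_arcsin (by linarith) ha1.le, Real.tan_arcsin, Real.tan_arcsin]
  have h1s : Real.sqrt (1 - s^2) = c := by rw [hc1, Real.sqrt_sq hc_pos.le]
  rw [h1s]
  have hprod : a / Real.sqrt (1 - a^2) * (s / c) = a * sin (φ/2) / c := by
    rw [hs_def]
    have hsq : Real.sqrt (1 - a^2) ≠ 0 := (Real.sqrt_pos.mpr h1a).ne'
    field_simp
  rw [hprod]
  ring
end
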